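/- The set L^H of all elements of L²(Ω, F, P) having a representative of the form U_0 + Σ_{k=0}^{N−1} φ_k·ΔM_k, where U_0 is square-integrable and H_0-measurable and φ is an admissible ℍ-predictable process, is a closed linear subspace of L²(Ω, F, P). -/

import Mathlib

/-!
An `f ∈ L²` lies in `L^H` iff the martingale `E[f | 𝔽 j]` equals `f` at time `N`, starts
`ℍ 0`-measurable, and has increments `E[f | 𝔽 (k+1)] - E[f | 𝔽 k] = φ_k ΔM_k` with `φ_k`
`ℍ k`-measurable: for `f = U₀ + Σ φ_k ΔM_k` these conditional expectations are the partial sums,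
since the partial sums form a martingale. Conditional expectation is continuous on `L²`, so it
remains to see that `{φ V : φ m-measurable}` is closed in `L²`. If `φ_n V → g` in `L²`, then a.e.
along a subsequence; there `φ_n → g / V` wherever `V ≠ 0`, so the `m`-measurable pointwise limit of
`φ_n` (set to anything where it does not exist) is a factor for `g`.
-/

open MeasureTheory Filter Topology Finset

theorem eq_limUnder_mul_of_tendsto {ψ : ℕ → ℝ} {v d : ℝ}
    (h : Tendsto (fun n => ψ n * v) atTop (𝓝 d)) : d = limUnder atTop ψ * v := by
  by_cases hv : v = 0
  · subst hv
    simpa using tendsto_nhds_unique h (by simp)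
  · have hψ : Tendsto ψ atTop (𝓝 (d / v)) := by
      simpa [mul_div_cancel_right₀ _ hv] using h.div_const v
    rw [hψ.limUnder_eq, div_mul_cancel₀ _ hv]

namespace MeasureTheory

variable {Ω : Type*} {mΩ : MeasurableSpace Ω} {P : Measure Ω}

theorem exists_stronglyMeasurable_ae_eq_mul_of_tendsto {m : MeasurableSpace Ω} {ψ : ℕ → Ω → ℝ}
    (hψ : ∀ n, StronglyMeasurable[m] (ψ n)) {V D : Ω → ℝ}
    (h : ∀ᵐ ω ∂P, Tendsto (fun n => ψ n ω * V ω) atTop (𝓝 (D ω))) :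
    ∃ φ : Ω → ℝ, StronglyMeasurable[m] φ ∧ D =ᵐ[P] φ * V :=
  ⟨fun ω => limUnder atTop (ψ · ω), StronglyMeasurable.limUnder hψ,
    h.mono fun _ => eq_limUnder_mul_of_tendsto⟩

variable (P) in
def measurableMultiples (m : MeasurableSpace Ω) (V : Ω → ℝ) : Submodule ℝ (Lp ℝ 2 P) where
  carrier := {g | ∃ φ : Ω → ℝ, StronglyMeasurable[m] φ ∧ g =ᵐ[P] φ * V}
  zero_mem' := ⟨0, stronglyMeasurable_zero, (Lp.coeFn_zero ℝ 2 P).trans (by simp)⟩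
  add_mem' := by
    rintro g h ⟨φ, hφ, hg⟩ ⟨ψ, hψ, hh⟩
    exact ⟨φ + ψ, hφ.add hψ,
      (Lp.coeFn_add g h).trans ((hg.add hh).trans (.of_eq (add_mul φ ψ V).symm))⟩
  smul_mem' := by
    rintro c g ⟨φ, hφ, hg⟩
    exact ⟨c • φ, hφ.const_smul c,
      (Lp.coeFn_smul c g).trans ((hg.const_smul c).trans (.of_eq (smul_mul_assoc c φ V).symm))⟩

theorem mem_measurableMultiples {m : MeasurableSpace Ω} {V : Ω → ℝ} {g : Lp ℝ 2 P} :
    g ∈ measurableMultiples P m V ↔ ∃ φ : Ω → ℝ, StronglyMeasurable[m] φ ∧ g =ᵐ[P] φ * V :=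
  Iff.rfl

theorem isClosed_measurableMultiples (m : MeasurableSpace Ω) (V : Ω → ℝ) :
    IsClosed (measurableMultiples P m V : Set (Lp ℝ 2 P)) := by
  refine isSeqClosed_iff_isClosed.mp fun g f hg hlim => ?_
  choose φ hφ hgφ using fun n => mem_measurableMultiples.mp (hg n)
  obtain ⟨ns, -, hns⟩ := (tendstoInMeasure_of_tendsto_Lp hlim).exists_seq_tendsto_ae
  refine exists_stronglyMeasurable_ae_eq_mul_of_tendsto (fun i => hφ (ns i)) ?_
  filter_upwards [hns, ae_all_iff.mpr hgφ] with ω hω hgω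
  simpa only [hgω, Pi.mul_apply] using hω

variable (P) in
noncomputable def condExpL2Lp {m : MeasurableSpace Ω} (hm : m ≤ mΩ) : Lp ℝ 2 P →L[ℝ] Lp ℝ 2 P :=
  (Submodule.subtypeL _).comp (condExpL2 ℝ ℝ hm)

theorem condExpL2Lp_ae_eq [IsFiniteMeasure P] {m : MeasurableSpace Ω} (hm : m ≤ mΩ)
    (f : Lp ℝ 2 P) : condExpL2Lp P hm f =ᵐ[P] P[f|m] := by
  simpa only [condExpL2Lp, ContinuousLinearMap.comp_apply, Submodule.subtypeL_apply,
    Lp.toLp_coeFn] using (Lp.memLp f).condExpL2_ae_eq_condExp (𝕜 := ℝ) hm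

theorem Martingale.condExp_ae_eq_min [IsFiniteMeasure P] {𝔽 : Filtration ℕ mΩ} {X : ℕ → Ω → ℝ}
    (hX : Martingale X 𝔽 P) (N j : ℕ) : P[X N|𝔽 j] =ᵐ[P] X (min j N) := by
  rcases le_total j N with h | h
  · rw [min_eq_left h]
    exact hX.condExp_ae_eq h
  · rw [min_eq_right h, condExp_of_stronglyMeasurable (𝔽.le j)
      ((hX.stronglyMeasurable N).mono (𝔽.mono h)) (hX.integrable N)]

theorem Martingale.condExp_sub_ae_eq_zero {𝔽 : Filtration ℕ mΩ} {M : ℕ → Ω → ℝ}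
    (hM : Martingale M 𝔽 P) (k : ℕ) : P[M (k + 1) - M k|𝔽 k] =ᵐ[P] 0 := by
  filter_upwards [condExp_sub (hM.integrable (k + 1)) (hM.integrable k) (𝔽 k),
    hM.condExp_ae_eq k.le_succ, hM.condExp_ae_eq (le_refl k)] with ω h h₁ h₀
  simp [h, h₁, h₀]

theorem Martingale.add_sum_mul_sub [IsFiniteMeasure P] {𝔽 : Filtration ℕ mΩ}
    {M : ℕ → Ω → ℝ} (hM : Martingale M 𝔽 P) {U : Ω → ℝ} {φ : ℕ → Ω → ℝ}
    (hU : StronglyMeasurable[𝔽 0] U) (hUi : Integrable U P)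
    (hφ : ∀ k, StronglyMeasurable[𝔽 k] (φ k))
    (hφM : ∀ k, Integrable (fun ω => φ k ω * (M (k + 1) ω - M k ω)) P) :
    Martingale (fun n ω => U ω + ∑ k ∈ range n, φ k ω * (M (k + 1) ω - M k ω)) 𝔽 P := by
  have hterm : ∀ k n, k < n → StronglyMeasurable[𝔽 n] (φ k * (M (k + 1) - M k)) :=
    fun k n hk => ((hφ k).mono (𝔽.mono hk.le)).mul
      (((hM.stronglyMeasurable (k + 1)).mono (𝔽.mono hk)).sub
        ((hM.stronglyMeasurable k).mono (𝔽.mono hk.le)))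
  refine martingale_of_condExp_sub_eq_zero_nat (fun n => ?_) (fun n => ?_) (fun k => ?_)
  · exact (hU.mono (𝔽.mono n.zero_le)).add
      (Finset.stronglyMeasurable_fun_sum _ fun k hk => hterm k n (mem_range.mp hk))
  · exact hUi.add (integrable_finsetSum _ fun k _ => hφM k)
  · have hincr : (fun ω => U ω + ∑ j ∈ range (k + 1), φ j ω * (M (j + 1) ω - M j ω)) -
        (fun ω => U ω + ∑ j ∈ range k, φ j ω * (M (j + 1) ω - M j ω)) =
        φ k * (M (k + 1) - M k) := by
      ext ω
      simp [sum_range_succ]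
    rw [hincr]
    filter_upwards [condExp_mul_of_stronglyMeasurable_left (g := M (k + 1) - M k) (hφ k)
      (hφM k) ((hM.integrable (k + 1)).sub (hM.integrable k)),
      hM.condExp_sub_ae_eq_zero k] with ω h h₀
    simp only [h, Pi.mul_apply, h₀, Pi.zero_apply, mul_zero]

variable (P) in
noncomputable def martingaleTransformSubmodule (𝔽 : Filtration ℕ mΩ) (ℍ : ℕ → MeasurableSpace Ω)
    (M : ℕ → Ω → ℝ) (N : ℕ) : Submodule ℝ (Lp ℝ 2 P) :=
  LinearMap.ker (condExpL2Lp P (𝔽.le N) - 1 : Lp ℝ 2 P →L[ℝ] Lp ℝ 2 P).toLinearMap ⊓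
    (measurableMultiples P (ℍ 0) 1).comap (condExpL2Lp P (𝔽.le 0)).toLinearMap ⊓
    ⨅ k, (measurableMultiples P (ℍ k) (M (k + 1) - M k)).comap
      (condExpL2Lp P (𝔽.le (k + 1)) - condExpL2Lp P (𝔽.le k) :
        Lp ℝ 2 P →L[ℝ] Lp ℝ 2 P).toLinearMap

theorem isClosed_martingaleTransformSubmodule (𝔽 : Filtration ℕ mΩ) (ℍ : ℕ → MeasurableSpace Ω)
    (M : ℕ → Ω → ℝ) (N : ℕ) :
    IsClosed (martingaleTransformSubmodule P 𝔽 ℍ M N : Set (Lp ℝ 2 P)) := by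
  simp only [martingaleTransformSubmodule, Submodule.coe_inf, Submodule.coe_iInf,
    Submodule.comap_coe, ContinuousLinearMap.coe_coe]
  exact ((ContinuousLinearMap.isClosed_ker _).inter
    ((isClosed_measurableMultiples _ _).preimage (ContinuousLinearMap.continuous _))).inter
    (isClosed_iInter fun k =>
      (isClosed_measurableMultiples _ _).preimage (ContinuousLinearMap.continuous _))

theorem mem_martingaleTransformSubmodule_iff {𝔽 : Filtration ℕ mΩ} {ℍ : ℕ → MeasurableSpace Ω}
    {M : ℕ → Ω → ℝ} {N : ℕ} {f : Lp ℝ 2 P} :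
    f ∈ martingaleTransformSubmodule P 𝔽 ℍ M N ↔ condExpL2Lp P (𝔽.le N) f = f ∧
      condExpL2Lp P (𝔽.le 0) f ∈ measurableMultiples P (ℍ 0) 1 ∧
      ∀ k, condExpL2Lp P (𝔽.le (k + 1)) f - condExpL2Lp P (𝔽.le k) f ∈
        measurableMultiples P (ℍ k) (M (k + 1) - M k) := by
  simp only [martingaleTransformSubmodule, Submodule.mem_inf, Submodule.mem_iInf, LinearMap.mem_ker,
    Submodule.mem_comap, ContinuousLinearMap.coe_coe, sub_apply, one_apply_eq_self, sub_eq_zero,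
    and_assoc]

theorem mem_martingaleTransformSubmodule_of_ae_eq [IsFiniteMeasure P] {𝔽 : Filtration ℕ mΩ}
    {ℍ : ℕ → MeasurableSpace Ω} (hle : ∀ k, ℍ k ≤ 𝔽 k) {M : ℕ → Ω → ℝ}
    (hM : Martingale M 𝔽 P) {N : ℕ} {f : Lp ℝ 2 P} {U : Ω → ℝ} {φ : ℕ → Ω → ℝ}
    (hU : MemLp U 2 P) (hUm : StronglyMeasurable[ℍ 0] U)
    (hφ : ∀ k, StronglyMeasurable[ℍ k] (φ k))
    (hφM : ∀ k, MemLp (fun ω => φ k ω * (M (k + 1) ω - M k ω)) 2 P)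
    (hf : f =ᵐ[P] fun ω => U ω + ∑ k ∈ range N, φ k ω * (M (k + 1) ω - M k ω)) :
    f ∈ martingaleTransformSubmodule P 𝔽 ℍ M N := by
  set X : ℕ → Ω → ℝ := fun n ω => U ω + ∑ k ∈ range n, φ k ω * (M (k + 1) ω - M k ω)
  have hXm : Martingale X 𝔽 P := hM.add_sum_mul_sub (hUm.mono (hle 0))
    (hU.integrable one_le_two) (fun k => (hφ k).mono (hle k))
    (fun k => (hφM k).integrable one_le_two)
  have hE : ∀ j, condExpL2Lp P (𝔽.le j) f =ᵐ[P] X (min j N) := fun j =>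
    (condExpL2Lp_ae_eq _ f).trans ((condExp_congr_ae hf).trans (hXm.condExp_ae_eq_min N j))
  refine mem_martingaleTransformSubmodule_iff.mpr
    ⟨Lp.ext ((hE N).trans ?_), ⟨U, hUm, (hE 0).trans ?_⟩, fun k => ?_⟩
  · simpa using hf.symm
  · exact .of_eq (by ext ω; simp [X])
  have hincr : ∀ᵐ ω ∂P, ((condExpL2Lp P (𝔽.le (k + 1)) f - condExpL2Lp P (𝔽.le k) f :
      Lp ℝ 2 P) : Ω → ℝ) ω = X (min (k + 1) N) ω - X (min k N) ω := by
    filter_upwards [Lp.coeFn_sub (condExpL2Lp P (𝔽.le (k + 1)) f) (condExpL2Lp P (𝔽.le k) f),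
      hE (k + 1), hE k] with ω h h₁ h₀
    rw [h, Pi.sub_apply, h₁, h₀]
  rcases lt_or_ge k N with hk | hk
  · refine ⟨φ k, hφ k, hincr.mono fun ω h => h.trans ?_⟩
    simp [X, min_eq_left (show k + 1 ≤ N from hk), min_eq_left hk.le, sum_range_succ]
  · refine ⟨0, stronglyMeasurable_zero, hincr.mono fun ω h => h.trans ?_⟩
    simp [min_eq_right hk, min_eq_right (hk.trans k.le_succ)]

theorem exists_ae_eq_of_mem_martingaleTransformSubmodule {𝔽 : Filtration ℕ mΩ}
    {ℍ : ℕ → MeasurableSpace Ω} {M : ℕ → Ω → ℝ} {N : ℕ} {f : Lp ℝ 2 P}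
    (hf : f ∈ martingaleTransformSubmodule P 𝔽 ℍ M N) :
    ∃ (U : Ω → ℝ) (φ : ℕ → Ω → ℝ), MemLp U 2 P ∧ StronglyMeasurable[ℍ 0] U ∧
      (∀ k, StronglyMeasurable[ℍ k] (φ k)) ∧
      (∀ k, MemLp (fun ω => φ k ω * (M (k + 1) ω - M k ω)) 2 P) ∧
      f =ᵐ[P] fun ω => U ω + ∑ k ∈ range N, φ k ω * (M (k + 1) ω - M k ω) := by
  obtain ⟨hN, ⟨U, hUm, hU⟩, hincr⟩ := mem_martingaleTransformSubmodule_iff.mp hf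
  choose φ hφ hφM using hincr
  set g : ℕ → Ω → ℝ := fun j => condExpL2Lp P (𝔽.le j) f with hg
  refine ⟨U, φ, (Lp.memLp _).ae_eq (hU.trans (.of_eq (mul_one U))), hUm, hφ,
    fun k => (Lp.memLp _).ae_eq (hφM k), ?_⟩
  have hφg : ∀ᵐ ω ∂P, ∀ k, φ k ω * (M (k + 1) ω - M k ω) = g (k + 1) ω - g k ω := by
    refine ae_all_iff.mpr fun k => ?_
    filter_upwards [hφM k, Lp.coeFn_sub (condExpL2Lp P (𝔽.le (k + 1)) f)
      (condExpL2Lp P (𝔽.le k) f)] with ω h h'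
    exact h.symm.trans h'
  filter_upwards [hU, hφg] with ω hUω hφω
  have hfN : (f : Ω → ℝ) ω = g N ω := by simp only [hg, hN]
  have hg0 : g 0 ω = U ω := by simpa using hUω
  rw [hfN, sum_congr rfl fun k _ => hφω k, sum_range_sub (g · ω), hg0, add_sub_cancel]

end MeasureTheory

theorem stmt_8 {Ω : Type*} {mΩ : MeasurableSpace Ω} {P : Measure Ω} [IsProbabilityMeasure P]
    (N : ℕ) (𝔽 ℍ : Filtration ℕ mΩ) (hle : ∀ k, ℍ k ≤ 𝔽 k)
    (M : ℕ → Ω → ℝ) (hM : Martingale M 𝔽 P) :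
    ∃ S : Submodule ℝ (Lp ℝ 2 P),
      IsClosed (S : Set (Lp ℝ 2 P)) ∧
      (S : Set (Lp ℝ 2 P)) =
        { f : Lp ℝ 2 P | ∃ (U₀ : Ω → ℝ) (φ : ℕ → Ω → ℝ),
            MemLp U₀ 2 P ∧ StronglyMeasurable[ℍ 0] U₀ ∧
            (∀ k, StronglyMeasurable[ℍ k] (φ k)) ∧
            (∀ k, MemLp (fun ω => φ k ω * (M (k + 1) ω - M k ω)) 2 P) ∧
            (f : Ω → ℝ) =ᵐ[P]
              fun ω => U₀ ω + ∑ k ∈ Finset.range N, φ k ω * (M (k + 1) ω - M k ω) } := by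
  refine ⟨martingaleTransformSubmodule P 𝔽 ℍ M N, isClosed_martingaleTransformSubmodule 𝔽 ℍ M N,
    Set.ext fun f => ⟨exists_ae_eq_of_mem_martingaleTransformSubmodule, ?_⟩⟩
  rintro ⟨U₀, φ, hU, hUm, hφ, hφM, hf⟩
  exact mem_martingaleTransformSubmodule_of_ae_eq hle hM hU hUm hφ hφM hf
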